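/- arXiv:2006.16385 — 6 statements merged into one kernel-verified Lean document; each statement's English description precedes it below -/
import Mathlib

section
/- Let S = {−4, −2, 0, 2, 4} ⊆ ℝ and let p : ℝ → ℝ be any function such that for every x ∈ ℝ, p(x) ∈ S and |x − p(x)| ≤ |x − s| for every s ∈ S. Then ∫_ℝ (1/2)·e^{−|x|}·(p(x))² dx > ∫_ℝ (1/2)·e^{−|x|}·x² dx; indeed the right-hand side equals 2 and the left-hand side equals 4e^{−1} + 12e^{−3} > 2. -/
/-!
Off the ties `±1, ±3` the nearest point of `S` to `x` is unique, so `(p x)²` is `0`, `4` or `16`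
according as `|x| < 1`, `1 < |x| < 3` or `3 < |x|`, that is `4 • 𝟙{1 < |x|} + 12 • 𝟙{3 < |x|}`
almost everywhere. A Laplace variable has `P(|X| > a) = e^{-a}`, so the projected error is
`4e⁻¹ + 12e⁻³ ≈ 2.07`, while `E X² = Γ(3) = 2`.
-/

open MeasureTheory Real Set

theorem eq_of_forall_dist_le_of_forall_dist_lt {α : Type*} [PseudoMetricSpace α] {S : Set α}
    {x y t : α} (hy : y ∈ S) (hyx : ∀ s ∈ S, dist x y ≤ dist x s) (ht : t ∈ S)
    (htx : ∀ s ∈ S, s ≠ t → dist x t < dist x s) : y = t := by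
  by_contra hne
  exact (hyx t ht).not_gt (htx y hy hne)

noncomputable def gridRound (x : ℝ) : ℝ :=
  if x < -3 then -4 else if x < -1 then -2 else if x ≤ 1 then 0 else if x ≤ 3 then 2 else 4

noncomputable def gridSq (x : ℝ) : ℝ :=
  4 * {y : ℝ | 1 < |y|}.indicator 1 x + 12 * {y : ℝ | 3 < |y|}.indicator 1 x

theorem gridRound_mem (x : ℝ) : gridRound x ∈ ({-4, -2, 0, 2, 4} : Set ℝ) := by
  unfold gridRound
  split_ifs <;> simp

theorem gridRound_sq (x : ℝ) : gridRound x ^ 2 = gridSq x := by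
  unfold gridRound gridSq
  simp only [indicator_apply, mem_ofPred_eq, lt_abs, Pi.one_apply]
  split_ifs <;> grind

theorem sq_sub_gridRound_lt {x : ℝ} (hx : x ∉ ({-3, -1, 1, 3} : Set ℝ)) :
    ∀ s ∈ ({-4, -2, 0, 2, 4} : Set ℝ), s ≠ gridRound x → (x - gridRound x) ^ 2 < (x - s) ^ 2 := by
  simp only [mem_insert_iff, mem_singleton_iff, not_or] at hx
  unfold gridRound
  rintro s (rfl | rfl | rfl | rfl | rfl) hne <;> split_ifs at hne ⊢ <;> grind

theorem eq_gridRound_of_forall_abs_sub_le {p : ℝ → ℝ}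
    (hp : ∀ x : ℝ, p x ∈ ({-4, -2, 0, 2, 4} : Set ℝ))
    (hmin : ∀ x : ℝ, ∀ s ∈ ({-4, -2, 0, 2, 4} : Set ℝ), |x - p x| ≤ |x - s|)
    {x : ℝ} (hx : x ∉ ({-3, -1, 1, 3} : Set ℝ)) : p x = gridRound x :=
  eq_of_forall_dist_le_of_forall_dist_lt (hp x) (by simpa only [dist_eq] using hmin x)
    (gridRound_mem x) (by simpa only [dist_eq, sq_lt_sq] using sq_sub_gridRound_lt hx)

theorem ae_sq_eq_gridSq_of_forall_abs_sub_le {p : ℝ → ℝ}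
    (hp : ∀ x : ℝ, p x ∈ ({-4, -2, 0, 2, 4} : Set ℝ))
    (hmin : ∀ x : ℝ, ∀ s ∈ ({-4, -2, 0, 2, 4} : Set ℝ), |x - p x| ≤ |x - s|) :
    ∀ᵐ x, p x ^ 2 = gridSq x := by
  filter_upwards [(toFinite ({-3, -1, 1, 3} : Set ℝ)).countable.ae_notMem volume] with x hx
  rw [eq_gridRound_of_forall_abs_sub_le hp hmin hx, gridRound_sq]

theorem integral_laplace_mul_indicator_lt_abs {a : ℝ} (ha : 0 ≤ a) :
    ∫ x, (1 / 2) * exp (-|x|) * {y : ℝ | a < |y|}.indicator 1 x = exp (-a) := by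
  have hcomp : ∀ x : ℝ, (1 / 2) * exp (-|x|) * {y : ℝ | a < |y|}.indicator 1 x
      = (Ioi a).indicator (fun t ↦ (1 / 2) * exp (-t)) |x| := by
    intro x
    by_cases h : a < |x| <;> simp [h]
  simp_rw [hcomp]
  rw [integral_comp_abs (f := (Ioi a).indicator fun t ↦ (1 / 2) * exp (-t)),
    setIntegral_indicator measurableSet_Ioi, Ioi_inter_Ioi, max_eq_right ha,
    integral_const_mul, integral_exp_neg_Ioi]
  ring

theorem integral_laplace_mul_gridSq :
    ∫ x, (1 / 2) * exp (-|x|) * gridSq x = 4 * exp (-1) + 12 * exp (-3) := by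
  have tail {a : ℝ} (ha : 0 ≤ a) := integral_laplace_mul_indicator_lt_abs ha
  -- a non-integrable function has integral `0`, so the nonzero tail integrals force integrability
  have integrable {a : ℝ} (ha : 0 ≤ a) :
      Integrable fun x ↦ (1 / 2) * exp (-|x|) * {y : ℝ | a < |y|}.indicator 1 x :=
    .of_integral_ne_zero (by rw [tail ha]; exact (exp_pos _).ne')
  simp_rw [gridSq, mul_add, mul_left_comm _ (4 : ℝ), mul_left_comm _ (12 : ℝ)]
  rw [integral_add ((integrable zero_le_one).const_mul 4) ((integrable zero_le_three).const_mul 12),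
    integral_const_mul, integral_const_mul, tail zero_le_one, tail zero_le_three]

theorem integral_laplace_mul_sq : ∫ x, (1 / 2) * exp (-|x|) * x ^ 2 = 2 := by
  have hcomp := integral_comp_abs (f := fun t ↦ (1 / 2) * exp (-t) * t ^ 2)
  have hGamma : ∫ t in Ioi 0, exp (-t) * t ^ 2 = 2 := by
    have := Gamma_eq_integral (s := 3) (by norm_num)
    norm_num [rpow_two] at this
    exact this.symm
  simp only [sq_abs] at hcomp
  simp_rw [hcomp, mul_assoc, integral_const_mul, hGamma]
  norm_num

theorem two_lt_four_mul_exp_neg_one_add_twelve_mul_exp_neg_three :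
    2 < 4 * exp (-1) + 12 * exp (-3) := by
  have he : exp 1 < 2.7182818286 := exp_one_lt_d9
  have hinv : exp (-1) * exp 1 = 1 := by rw [← exp_add]; norm_num
  have hlow : 0.3677 < exp (-1) := by nlinarith [exp_pos (-1)]
  have hcube : exp (-3) = exp (-1) ^ 3 := by rw [← exp_nat_mul]; norm_num
  nlinarith [pow_lt_pow_left₀ hlow (by norm_num) three_ne_zero]

/-- **Proposition 1** (instantiated by its proof): if `p` is a nearest-point projection of the
real line onto the finite set `S = {-4, -2, 0, 2, 4}`, then projecting a standard Laplace random
variable (density `(1/2)e^{-|x|}`, true value `0`) onto `S` strictly increases the expected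
squared error: the unprojected error is `2` while the projected error is
`4e⁻¹ + 12e⁻³ > 2`. -/
theorem projection_onto_nonconvex_set_increases_expected_error
    (p : ℝ → ℝ)
    (hp : ∀ x : ℝ, p x ∈ ({-4, -2, 0, 2, 4} : Set ℝ))
    (hmin : ∀ x : ℝ, ∀ s ∈ ({-4, -2, 0, 2, 4} : Set ℝ), |x - p x| ≤ |x - s|) :
    (∫ x : ℝ, (1 / 2) * Real.exp (-|x|) * x ^ 2) = 2 ∧
    (∫ x : ℝ, (1 / 2) * Real.exp (-|x|) * (p x) ^ 2)
      = 4 * Real.exp (-1) + 12 * Real.exp (-3) ∧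
    (∫ x : ℝ, (1 / 2) * Real.exp (-|x|) * (p x) ^ 2)
      > ∫ x : ℝ, (1 / 2) * Real.exp (-|x|) * x ^ 2 := by
  have hproj : ∫ x, (1 / 2) * exp (-|x|) * p x ^ 2 = 4 * exp (-1) + 12 * exp (-3) := by
    rw [← integral_laplace_mul_gridSq]
    refine integral_congr_ae ?_
    filter_upwards [ae_sq_eq_gridSq_of_forall_abs_sub_le hp hmin] with x hx
    rw [hx]
  refine ⟨integral_laplace_mul_sq, hproj, ?_⟩
  rw [hproj, integral_laplace_mul_sq]
  exact two_lt_four_mul_exp_neg_one_add_twelve_mul_exp_neg_three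
end

section
/- Let ℓ and n be natural numbers with 2 < ℓ ≤ n and let w₁, …, wₙ be nonnegative reals. Consider n papers where paper i has ℓ weight entries: one entry of value wᵢ and ℓ − 1 entries of value 0. For every partition of the n·ℓ weight entries' values into n multisets S₁, …, Sₙ each of cardinality ℓ (i.e., the multiset sum S₁ + ⋯ + Sₙ equals the multiset consisting of w₁, …, wₙ together with n(ℓ−1) zeros), there exists a function assigning each weight entry (i, s) with i ∈ [n], s ∈ [ℓ] to a reviewer in [n] such that each reviewer receives exactly ℓ entries, no reviewer receives two entries from the same paper, and for every reviewer j the multiset of values of the entries assigned to j equals Sⱼ. -/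
/-!
Lifting the partition of values to a partition of the entries sends the weight entry of paper `i`
to some reviewer `g i`, and every fibre of `g` has at most `ℓ` elements. Seat the papers around a
cycle of length `n`, grouped by `g`, and seat each reviewer with a nonempty fibre at the first
position of its block; then every paper lies fewer than `ℓ` steps after the seat of `g i`. Sending
the `ℓ` entries of the paper at position `p` to the reviewers seated at `p, p - 1, …, p - ℓ + 1`
(with the weight entry going to `g i`) gives every reviewer `ℓ` entries from distinct papers.
Since all other entries are `0`, only the weight entries and the fibre sizes matter for the value
multisets, and these agree with the lifted partition.
-/

open Finset Function

theorem Finset.exists_map_filter_eq_of_sum_eq_map {ι κ α : Type*} [DecidableEq ι] [Fintype κ]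
    [DecidableEq κ] [Nonempty κ] [DecidableEq α] (v : ι → α) (t : Finset ι)
    (S : κ → Multiset α) (hS : ∑ j, S j = t.val.map v) :
    ∃ h : ι → κ, ∀ j, (t.filter (h · = j)).val.map v = S j := by
  induction t using Finset.induction_on generalizing S with
  | empty =>
    refine ⟨fun _ => Classical.arbitrary κ, fun j => ?_⟩
    simp only [empty_val, Multiset.map_zero, sum_eq_zero_iff] at hS
    simp [hS j]
  | @insert a t ha ih =>
    rw [insert_val_of_notMem ha, Multiset.map_cons] at hS
    obtain ⟨j₀, -, hj₀⟩ := Multiset.mem_sum.1 (hS ▸ Multiset.mem_cons_self (v a) _)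
    obtain ⟨h, hh⟩ := ih (update S j₀ ((S j₀).erase (v a))) <| by
      refine (Multiset.cons_inj_right (v a)).1 (hS ▸ ?_)
      rw [sum_update_of_mem (mem_univ j₀), ← Multiset.cons_add, Multiset.cons_erase hj₀,
        sdiff_singleton_eq_erase, add_sum_erase _ _ (mem_univ j₀)]
    refine ⟨update h a j₀, fun j => ?_⟩
    have hfilter : t.filter (update h a j₀ · = j) = t.filter (h · = j) :=
      filter_congr fun i hi => by rw [update_of_ne (ne_of_mem_of_not_mem hi ha)]
    rw [filter_insert, hfilter, update_self]
    by_cases hj : j₀ = j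
    · subst hj
      rw [if_pos rfl, insert_val_of_notMem (fun h' => ha (mem_of_mem_filter a h')),
        Multiset.map_cons, hh, update_self, Multiset.cons_erase hj₀]
    · rw [if_neg hj, hh, update_of_ne (Ne.symm hj)]

theorem Finset.map_val_eq_of_filter_ne_zero_eq {ι α : Type*} [Zero α] [DecidableEq α] (v : ι → α)
    {A B : Finset ι} (hsupp : A.filter (v · ≠ 0) = B.filter (v · ≠ 0)) (hcard : #A = #B) :
    A.val.map v = B.val.map v := by
  have hsplit : ∀ C : Finset ι, C.val.map v =
      (C.filter (v · ≠ 0)).val.map v + Multiset.replicate (#C - #(C.filter (v · ≠ 0))) 0 := by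
    intro C
    have hzero : (C.filter fun e => ¬v e ≠ 0).val.map v =
        Multiset.replicate #(C.filter fun e => ¬v e ≠ 0) 0 :=
      Multiset.eq_replicate.2 ⟨Multiset.card_map _ _, by simp +contextual [eq_comm]⟩
    rw [← card_filter_add_card_filter_not (fun e => v e ≠ 0), Nat.add_sub_cancel_left, ← hzero,
      ← Multiset.map_add, filter_val, filter_val, Multiset.filter_add_not]
  rw [hsplit A, hsplit B, hsupp, hcard]

theorem Finset.card_filter_lt_lt_of_lt {α β : Type*} [Fintype α] [LinearOrder β] (f : α → β)
    {a : α} {y : β} (h : f a < y) : #{x | f x < f a} < #{x | f x < y} :=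
  card_lt_card <| (ssubset_iff_of_subset (monotone_filter_right _ fun _ _ hx => hx.trans h)).2
    ⟨a, by simp [h]⟩

theorem Finset.injOn_card_filter_lt {α β : Type*} [Fintype α] [LinearOrder β] (f : α → β) :
    Set.InjOn (fun y => #{x | f x < y}) (Set.range f) := by
  rintro _ ⟨a, rfl⟩ _ ⟨b, rfl⟩ hab
  by_contra hne
  rcases lt_or_gt_of_ne hne with h | h
  · exact (card_filter_lt_lt_of_lt f h).ne hab
  · exact (card_filter_lt_lt_of_lt f h).ne' hab

theorem Equiv.Perm.exists_eqOn_of_injOn {α : Type*} [Fintype α] {s : Set α} {f : α → α}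
    (hf : Set.InjOn f s) : ∃ σ : Equiv.Perm α, Set.EqOn σ f s :=
  let ⟨e, he⟩ := Set.MapsTo.exists_equiv_extend_of_card_eq (t := univ) (by simp)
    (fun _ _ => mem_univ _) hf
  ⟨e.trans (Equiv.subtypeUnivEquiv mem_univ), he⟩

theorem Fin.exists_perm_sub_val_lt {n ℓ : ℕ} [NeZero n] (g : Fin n → Fin n)
    (hg : ∀ j, #{i | g i = j} ≤ ℓ) :
    ∃ π ρ : Equiv.Perm (Fin n), ∀ i, ((π i - ρ (g i) : Fin n) : ℕ) < ℓ := by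
  -- paper `i` is seated at its rank for `key`, reviewer `j` at `#{i | g i < j}` if `j ∈ range g`
  let key : Fin n → Fin n ×ₗ Fin n := fun i => toLex (g i, i)
  have hkey : Injective key := fun a b h => congrArg Prod.snd (toLex.injective h)
  have hpos_lt : ∀ i, #{i' | key i' < key i} < n := fun i =>
    (card_lt_univ_of_notMem (x := i) (by simp)).trans_eq (Fintype.card_fin n)
  have hstart_le : ∀ i, #{i' | g i' < g i} ≤ #{i' | key i' < key i} := fun i =>
    card_le_card (monotone_filter_right _ fun _ _ h => Prod.Lex.toLex_lt_toLex.2 (Or.inl h))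
  have hpos_lt_start : ∀ i, #{i' | key i' < key i} < #{i' | g i' < g i} + ℓ := fun i =>
    calc #{i' | key i' < key i}
        < #{i' | g i' < g i ∨ g i' = g i} := card_lt_card <|
          (ssubset_iff_of_subset (monotone_filter_right _ fun _ _ h =>
            (Prod.Lex.toLex_lt_toLex.1 h).imp_right And.left)).2 ⟨i, by simp⟩
      _ ≤ #{i' | g i' < g i} + #{i' | g i' = g i} := by
          rw [filter_or]; exact card_union_le _ _
      _ ≤ #{i' | g i' < g i} + ℓ := Nat.add_le_add_left (hg _) _
  obtain ⟨π, hπ⟩ := Equiv.Perm.exists_eqOn_of_injOn (s := Set.univ)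
    (f := fun i => ⟨#{i' | key i' < key i}, hpos_lt i⟩) fun a _ b _ hab =>
      hkey (injOn_card_filter_lt key ⟨a, rfl⟩ ⟨b, rfl⟩ (Fin.mk.inj hab))
  have hstart_lt : ∀ i, #{i' | g i' < g i} < n := fun i => (hstart_le i).trans_lt (hpos_lt i)
  obtain ⟨ρ, hρ⟩ := Equiv.Perm.exists_eqOn_of_injOn (s := Set.range g)
    (f := fun j => Fin.ofNat n #{i | g i < j}) <| by
      rintro _ ⟨a, rfl⟩ _ ⟨b, rfl⟩ hab
      refine injOn_card_filter_lt g ⟨a, rfl⟩ ⟨b, rfl⟩ ?_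
      simpa only [Fin.val_ofNat, Nat.mod_eq_of_lt (hstart_lt _)] using congrArg Fin.val hab
  refine ⟨π, ρ, fun i => ?_⟩
  have hπi : (π i : ℕ) = #{i' | key i' < key i} := congrArg Fin.val (hπ (Set.mem_univ i))
  have hρi : (ρ (g i) : ℕ) = #{i' | g i' < g i} := by
    rw [hρ ⟨i, rfl⟩, Fin.val_ofNat, Nat.mod_eq_of_lt (hstart_lt i)]
  have hle : ρ (g i) ≤ π i := Fin.le_def.2 (hρi ▸ hπi ▸ hstart_le i)
  rw [Fin.sub_val_of_le hle, hπi, hρi]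
  have := hpos_lt_start i
  omega

theorem Fin.exists_assignment_of_card_fiber_le {n ℓ : ℕ} [NeZero ℓ] (hℓn : ℓ ≤ n)
    (g : Fin n → Fin n) (hg : ∀ j, #{i | g i = j} ≤ ℓ) :
    ∃ f : Fin n × Fin ℓ → Fin n, (∀ i, f (i, 0) = g i) ∧ (∀ i, Injective fun s => f (i, s)) ∧
      ∀ j, #{e | f e = j} = ℓ := by
  have : NeZero n := ⟨by have := NeZero.pos ℓ; omega⟩
  obtain ⟨π, ρ, hπρ⟩ := Fin.exists_perm_sub_val_lt g hg
  let δ : Fin n → Fin ℓ := fun i => ⟨(π i - ρ (g i) : Fin n), hπρ i⟩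
  -- slot `s` of paper `i` goes to seat `π i - (δ i + s)`, and `δ i + s` runs over `Fin ℓ`
  -- slot `s` of paper `i` goes to seat `π i - (δ i + s)`, and `δ i + s` runs over `Fin ℓ`
  let f : Fin n × Fin ℓ → Fin n := fun e => ρ.symm (π e.1 - Fin.castLE hℓn (δ e.1 + e.2))
  have hf : ∀ e j, f e = j ↔ π e.1 = ρ j + Fin.castLE hℓn (δ e.1 + e.2) := fun e j => by
    rw [Equiv.symm_apply_eq, sub_eq_iff_eq_add]
  refine ⟨f, fun i => (hf _ _).2 ?_, fun i s s' h => ?_, fun j => ?_⟩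
  · rw [add_zero, show Fin.castLE hℓn (δ i) = π i - ρ (g i) from Fin.ext rfl, add_sub_cancel]
  · simpa [f] using h
  · let paper : Fin ℓ → Fin n := fun t => π.symm (ρ j + Fin.castLE hℓn t)
    refine .trans ?_ (card_fin ℓ)
    refine card_nbij' (fun e => δ e.1 + e.2) (fun t => (paper t, t - δ (paper t)))
      (fun _ _ => mem_coe.2 (mem_univ _)) (fun t _ => ?_) (fun e he => ?_) (fun t _ => ?_)
    · simp [hf, paper]
    · have he : π e.1 = _ := (hf e j).1 (mem_filter.1 he).2
      simp [paper, ← he]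
    · simp

theorem ell_partition_realizable_as_valid_assignment_general
    (ℓ n : ℕ) (hℓ : 2 < ℓ) (hℓn : ℓ ≤ n)
    (w : Fin n → ℝ)
    (S : Fin n → Multiset ℝ)
    (hScard : ∀ j, (S j).card = ℓ)
    (hSpart : ∑ j : Fin n, S j
      = Multiset.map (fun e : Fin n × Fin ℓ => if (e.2 : ℕ) = 0 then w e.1 else 0)
          (Finset.univ : Finset (Fin n × Fin ℓ)).val) :
    ∃ f : Fin n × Fin ℓ → Fin n,
      (∀ j : Fin n,
        (Finset.univ.filter (fun e : Fin n × Fin ℓ => f e = j)).card = ℓ) ∧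
      (∀ (i : Fin n) (s s' : Fin ℓ), f (i, s) = f (i, s') → s = s') ∧
      (∀ j : Fin n,
        Multiset.map (fun e : Fin n × Fin ℓ => if (e.2 : ℕ) = 0 then w e.1 else 0)
            ((Finset.univ.filter (fun e : Fin n × Fin ℓ => f e = j)).val)
          = S j) := by
  have : NeZero ℓ := ⟨by omega⟩
  have : NeZero n := ⟨by omega⟩
  set v : Fin n × Fin ℓ → ℝ := fun e => if (e.2 : ℕ) = 0 then w e.1 else 0
  obtain ⟨h, hh⟩ := exists_map_filter_eq_of_sum_eq_map v univ S hSpart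
  have hh_card : ∀ j, #{e | h e = j} = ℓ := fun j =>
    (Multiset.card_map v _).symm.trans ((congrArg Multiset.card (hh j)).trans (hScard j))
  have hg : ∀ j, #{i | h (i, 0) = j} ≤ ℓ := fun j =>
    (card_le_card_of_injOn (fun i => (i, 0)) (fun i hi => by simpa using hi)
      fun _ _ _ _ hab => congrArg Prod.fst hab).trans (hh_card j).le
  obtain ⟨f, hf₀, hf_inj, hf_card⟩ := Fin.exists_assignment_of_card_fiber_le hℓn _ hg
  have hagree : ∀ e, v e ≠ 0 → f e = h e := fun e he => by
    have he₂ : e.2 = 0 := Fin.ext (by_contra fun h₂ => he (if_neg h₂))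
    rw [show e = (e.1, 0) from Prod.ext rfl he₂, hf₀]
  refine ⟨f, hf_card, hf_inj, fun j => ?_⟩
  rw [← hh j]
  refine map_val_eq_of_filter_ne_zero_eq v ?_ ((hf_card j).trans (hh_card j).symm)
  ext e
  simp only [mem_filter, mem_univ, true_and]
  exact and_congr_left fun he => by rw [hagree e he]

/-- **Lemma 1**: in the reduction setting with `n` papers, where paper `i` has `ℓ` weight
entries — one of value `w i` and `ℓ - 1` zeros — any partition of the multiset of all `n·ℓ`
weight values into `n` multisets of cardinality `ℓ` can be realized as a valid assignment of
the weight entries to `n` reviewers: each reviewer `j` gets exactly `ℓ` entries, no two from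
the same paper, and the multiset of values of reviewer `j`'s entries is `S j`. -/
theorem ell_partition_realizable_as_valid_assignment
    (ℓ n : ℕ) (hℓ : 2 < ℓ) (hℓn : ℓ ≤ n)
    (w : Fin n → ℝ) (hw : ∀ i, 0 ≤ w i)
    (S : Fin n → Multiset ℝ)
    (hScard : ∀ j, (S j).card = ℓ)
    (hSpart : ∑ j : Fin n, S j
      = Multiset.map (fun e : Fin n × Fin ℓ => if (e.2 : ℕ) = 0 then w e.1 else 0)
          (Finset.univ : Finset (Fin n × Fin ℓ)).val) :
    ∃ f : Fin n × Fin ℓ → Fin n,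
      (∀ j : Fin n,
        (Finset.univ.filter (fun e : Fin n × Fin ℓ => f e = j)).card = ℓ) ∧
      (∀ (i : Fin n) (s s' : Fin ℓ), f (i, s) = f (i, s') → s = s') ∧
      (∀ j : Fin n,
        Multiset.map (fun e : Fin n × Fin ℓ => if (e.2 : ℕ) = 0 then w e.1 else 0)
            ((Finset.univ.filter (fun e : Fin n × Fin ℓ => f e = j)).val)
          = S j) :=
  ell_partition_realizable_as_valid_assignment_general ℓ n hℓ hℓn w S hScard hSpart
end

section
/- Let ℓ and n be natural numbers with 2 < ℓ ≤ n and ℓ dividing n, let w₁, …, wₙ be nonnegative reals with average a = (1/n)·∑_{i=1}^n wᵢ, and consider n papers where paper i has ℓ weight entries: one entry of value wᵢ and ℓ − 1 entries of value 0. If the multiset {w₁, …, wₙ} can be partitioned into n/ℓ sub-multisets each of cardinality ℓ and each of sum ℓ·a, then there exists a valid assignment of the weight entries to the n reviewers whose sorted mean-weight vector equals the vector v ∈ ℝⁿ whose first n − n/ℓ coordinates are 0 and whose last n/ℓ coordinates are a. -/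
/-!
Lifting the partition of the values `w i` to a partition of the papers, and numbering the `ℓ`
papers of each block, identifies the papers with pairs `(t, r) : Fin (n / ℓ) × Fin ℓ`. Use the
same identification for the reviewers and send entry `s` of paper `(t, r)` to reviewer `(t, s)`.
Reviewer `(t, s)` then receives entry `s` of each of the `ℓ` papers of block `t`: these are the
`ℓ` weights of block `t` (mean `a`) when `s = 0`, and zeros otherwise.
-/

/-- An assignment of the weight entries `(i, s)` (paper `i`, entry `s`) to reviewers is valid
if each reviewer gets exactly `ℓ` entries and no reviewer gets two entries from the same paper. -/
def ValidAssign (m k n ℓ : ℕ) (f : Fin m × Fin k → Fin n) : Prop :=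
  (∀ j : Fin n, (Finset.univ.filter (fun e : Fin m × Fin k => f e = j)).card = ℓ) ∧
  ∀ (i : Fin m) (s s' : Fin k), f (i, s) = f (i, s') → s = s'

/-- The mean weight of reviewer `j`: `(1/ℓ)` times the sum of the values of the entries
assigned to `j`. -/
noncomputable def meanWeight (m k n ℓ : ℕ) (x : Fin m × Fin k → ℝ)
    (f : Fin m × Fin k → Fin n) (j : Fin n) : ℝ :=
  (1 / (ℓ : ℝ)) * ∑ e ∈ Finset.univ.filter (fun e : Fin m × Fin k => f e = j), x e

open Finset

namespace Multiset

theorem exists_equiv_of_map_univ_eq {α β γ : Type*} [Fintype α] [Fintype β] [DecidableEq γ]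
    {f : α → γ} {g : β → γ} (h : univ.val.map f = univ.val.map g) :
    ∃ e : α ≃ β, ∀ a, g (e a) = f a := by
  have hfiber : ∀ c, Fintype.card {a // f a = c} = Fintype.card {b // g b = c} := by
    intro c
    simpa [Fintype.card_subtype, count_map, Finset.card_def, Finset.filter_val, eq_comm]
      using congrArg (count c) h
  exact ⟨Equiv.ofFiberEquiv fun c => Fintype.equivOfCardEq (hfiber c), Equiv.ofFiberEquiv_map _⟩

theorem exists_map_univ_fin_eq {β : Type*} [DecidableEq β] (m : Multiset β) :
    ∃ p : Fin (card m) → β, univ.val.map p = m := by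
  let e : Fin (card m) ≃ m := (Fintype.equivFinOfCardEq (card_coe m)).symm
  refine ⟨fun r => e r, ?_⟩
  calc univ.val.map (fun r => (e r : β)) = (univ.val.map e).map (fun x : m => (x : β)) :=
        (map_map _ _ _).symm
    _ = m := by rw [map_univ_val_equiv, map_univ_coe]

theorem map_univ_prod {ι κ β : Type*} [Fintype ι] [Fintype κ] (f : ι × κ → β) :
    (univ : Finset (ι × κ)).val.map f = ∑ t, (univ : Finset κ).val.map fun r => f (t, r) := by
  rw [← Finset.univ_product_univ, Finset.product_val, Finset.sum_eq_multiset_sum]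
  simp only [SProd.sprod, Multiset.product, bind, map_join, map_map, Function.comp_def]
  rfl

theorem map_univ_ite {α β : Type*} [Fintype α] (p : α → Prop) [DecidablePred p] (a b : β) :
    univ.val.map (fun x => if p x then a else b)
      = replicate #{x | p x} a + replicate (Fintype.card α - #{x | p x}) b := by
  rw [← filter_add_not p univ.val, map_add,
    map_congr rfl fun x hx => if_pos (of_mem_filter hx),
    map_congr rfl fun x hx => if_neg (mem_filter.1 hx).2, map_const', map_const']
  congr 2
  exact Nat.eq_sub_of_add_eq' (card_filter_add_card_filter_not p)

end Multiset

theorem exists_equiv_prod_of_sum_eq_map_univ {α β ι : Type*} [Fintype α] [Fintype ι]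
    [DecidableEq β] {k : ℕ} (w : α → β) (P : ι → Multiset β)
    (hcard : ∀ t, Multiset.card (P t) = k) (hsum : ∑ t, P t = univ.val.map w) :
    ∃ σ : α ≃ ι × Fin k, ∀ t, univ.val.map (fun r => w (σ.symm (t, r))) = P t := by
  have : ∀ t, ∃ p : Fin k → β, univ.val.map p = P t := fun t =>
    hcard t ▸ (P t).exists_map_univ_fin_eq
  choose p hp using this
  have hmap : univ.val.map w = univ.val.map fun q : ι × Fin k => p q.1 q.2 := by
    rw [Multiset.map_univ_prod, hsum.symm]
    simp only [hp]
  obtain ⟨σ, hσ⟩ := Multiset.exists_equiv_of_map_univ_eq hmap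
  refine ⟨σ, fun t => ?_⟩
  simp only [← hσ, σ.apply_symm_apply, hp]

theorem card_filter_snd_val_eq_zero (ι : Type*) [Fintype ι] (k : ℕ) [NeZero k] :
    #{q : ι × Fin k | (q.2 : ℕ) = 0} = Fintype.card ι := by
  rw [card_filter, Fintype.sum_prod_type]
  simp [Fin.val_eq_zero_iff]

section BlockAssignment

variable {α ι κ : Type*}

def blockAssignment (σ : α ≃ ι × κ) (e : α × κ) : α :=
  σ.symm ((σ e.1).1, e.2)

@[simp]
theorem apply_blockAssignment (σ : α ≃ ι × κ) (e : α × κ) :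
    σ (blockAssignment σ e) = ((σ e.1).1, e.2) :=
  σ.apply_symm_apply _

theorem blockAssignment_eq_iff (σ : α ≃ ι × κ) (e : α × κ) (j : α) :
    blockAssignment σ e = j ↔ (σ e.1).1 = (σ j).1 ∧ e.2 = (σ j).2 := by
  rw [blockAssignment, Equiv.symm_apply_eq, Prod.ext_iff]

theorem sum_filter_blockAssignment_eq [Fintype α] [Fintype κ] [DecidableEq α] {M : Type*}
    [AddCommMonoid M] (σ : α ≃ ι × κ) (F : α × κ → M) (j : α) :
    ∑ e ∈ univ.filter (fun e => blockAssignment σ e = j), F e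
      = ∑ r, F (σ.symm ((σ j).1, r), (σ j).2) := by
  have hinv : ∀ e ∈ univ.filter (fun e => blockAssignment σ e = j),
      (σ.symm ((σ j).1, (σ e.1).2), (σ j).2) = e := by
    rintro ⟨i, s⟩ he
    simp only [blockAssignment_eq_iff, mem_filter, mem_univ, true_and] at he
    rw [← he.1, ← he.2, Prod.mk.eta, σ.symm_apply_apply]
  exact Finset.sum_nbij' (fun e => (σ e.1).2) (fun r => (σ.symm ((σ j).1, r), (σ j).2))
    (by simp) (by simp [blockAssignment_eq_iff]) hinv (by simp) fun e he => by rw [hinv e he]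

theorem validAssign_blockAssignment {n ℓ : ℕ} (σ : Fin n ≃ ι × Fin ℓ) :
    ValidAssign n ℓ n ℓ (blockAssignment σ) := by
  refine ⟨fun j => ?_, fun i s s' h => ?_⟩
  · rw [card_eq_sum_ones, sum_filter_blockAssignment_eq]
    simp
  · simpa using congrArg (fun j => (σ j).2) h

theorem meanWeight_blockAssignment {n ℓ : ℕ} (σ : Fin n ≃ ι × Fin ℓ) (w : Fin n → ℝ)
    (j : Fin n) :
    meanWeight n ℓ n ℓ (fun e => if (e.2 : ℕ) = 0 then w e.1 else 0) (blockAssignment σ) j =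
      if ((σ j).2 : ℕ) = 0 then (1 / (ℓ : ℝ)) * ∑ r, w (σ.symm ((σ j).1, r)) else 0 := by
  rw [meanWeight, sum_filter_blockAssignment_eq]
  split_ifs <;> simp [*]

end BlockAssignment

theorem partition_gives_assignment_with_sorted_mean_vector_v_general
    (ℓ n : ℕ) (hℓ : 2 < ℓ)
    (w : Fin n → ℝ)
    (a : ℝ)
    (P : Fin (n / ℓ) → Multiset ℝ)
    (hPcard : ∀ t, (P t).card = ℓ)
    (hPsum : ∀ t, (P t).sum = (ℓ : ℝ) * a)
    (hPpart : ∑ t : Fin (n / ℓ), P t = Multiset.map w (Finset.univ : Finset (Fin n)).val) :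
    ∃ f : Fin n × Fin ℓ → Fin n,
      ValidAssign n ℓ n ℓ f ∧
      Multiset.map
          (meanWeight n ℓ n ℓ (fun e => if (e.2 : ℕ) = 0 then w e.1 else 0) f)
          (Finset.univ : Finset (Fin n)).val
        = Multiset.map (fun i : Fin n => if (i : ℕ) < n - n / ℓ then (0 : ℝ) else a)
            (Finset.univ : Finset (Fin n)).val := by
  have : NeZero ℓ := ⟨by omega⟩
  obtain ⟨σ, hσ⟩ := exists_equiv_prod_of_sum_eq_map_univ w P hPcard hPpart
  have hblock : ∀ t, ∑ r, w (σ.symm (t, r)) = ℓ * a := fun t => by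
    rw [← hPsum t, ← hσ t, Finset.sum_eq_multiset_sum]
  set v : Fin (n / ℓ) × Fin ℓ → ℝ := fun q => if (q.2 : ℕ) = 0 then a else 0
  have hmean : meanWeight n ℓ n ℓ (fun e => if (e.2 : ℕ) = 0 then w e.1 else 0)
      (blockAssignment σ) = v ∘ σ := by
    ext j
    rw [meanWeight_blockAssignment, hblock, Function.comp_apply, one_div,
      inv_mul_cancel_left₀ (Nat.cast_ne_zero.2 (NeZero.ne ℓ))]
  have hcard : Fintype.card (Fin (n / ℓ) × Fin ℓ) = n := by
    rw [← Fintype.card_congr σ, Fintype.card_fin]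
  refine ⟨blockAssignment σ, validAssign_blockAssignment σ, ?_⟩
  calc _ = (univ : Finset (Fin (n / ℓ) × Fin ℓ)).val.map v := by
        rw [hmean, ← Multiset.map_map, Multiset.map_univ_val_equiv]
    _ = Multiset.replicate (n / ℓ) a + Multiset.replicate (n - n / ℓ) 0 := by
        rw [Multiset.map_univ_ite, card_filter_snd_val_eq_zero, hcard, Fintype.card_fin]
    _ = _ := by
        rw [Multiset.map_univ_ite, Fin.card_filter_val_lt, Fintype.card_fin,
          min_eq_right (Nat.sub_le _ _), Nat.sub_sub_self (Nat.div_le_self n ℓ), add_comm]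

/-- Forward direction of the NP-hardness reduction: if the multiset `{w₁, …, wₙ}` can be
partitioned into `n/ℓ` sub-multisets each of cardinality `ℓ` and sum `ℓ·a` (where `a` is the
average of the `wᵢ`), then in the setting where paper `i` has one entry of value `w i` and
`ℓ - 1` zero entries, there is a valid assignment whose sorted mean-weight vector is
`v = (0, …, 0, a, …, a)` (with `n/ℓ` trailing `a`'s); equivalently, the multiset of reviewer
mean weights equals the multiset of coordinates of `v`. -/
theorem partition_gives_assignment_with_sorted_mean_vector_v
    (ℓ n : ℕ) (hℓ : 2 < ℓ) (hℓn : ℓ ≤ n) (hdvd : ℓ ∣ n)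
    (w : Fin n → ℝ) (hw : ∀ i, 0 ≤ w i)
    (a : ℝ) (ha : a = (1 / (n : ℝ)) * ∑ i, w i)
    (P : Fin (n / ℓ) → Multiset ℝ)
    (hPcard : ∀ t, (P t).card = ℓ)
    (hPsum : ∀ t, (P t).sum = (ℓ : ℝ) * a)
    (hPpart : ∑ t : Fin (n / ℓ), P t = Multiset.map w (Finset.univ : Finset (Fin n)).val) :
    ∃ f : Fin n × Fin ℓ → Fin n,
      ValidAssign n ℓ n ℓ f ∧
      Multiset.map
          (meanWeight n ℓ n ℓ (fun e => if (e.2 : ℕ) = 0 then w e.1 else 0) f)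
          (Finset.univ : Finset (Fin n)).val
        = Multiset.map (fun i : Fin n => if (i : ℕ) < n - n / ℓ then (0 : ℝ) else a)
            (Finset.univ : Finset (Fin n)).val :=
  partition_gives_assignment_with_sorted_mean_vector_v_general ℓ n hℓ w a P hPcard hPsum hPpart
end

section
/- Let ℓ and n be natural numbers with 0 < ℓ ≤ n and ℓ dividing n, let a ≥ 0, and let v ∈ ℝⁿ be the vector whose first n − n/ℓ coordinates are 0 and whose last n/ℓ coordinates are a. Suppose v = ∑_{j=1}^N λⱼ·θ⁽ʲ⁾ is a convex combination (λⱼ ≥ 0, ∑_{j=1}^N λⱼ = 1) of finitely many vectors θ⁽ʲ⁾ ∈ ℝⁿ, each of which has nonnegative coordinates, is nondecreasing (θ⁽ʲ⁾₁ ≤ ⋯ ≤ θ⁽ʲ⁾ₙ), and has coordinate sum equal to (n/ℓ)·a. Then θ⁽ʲ⁾ = v for every j with λⱼ > 0. -/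
/-- Rigidity claim from the proof of the NP-hardness theorem: let
`v = (0, …, 0, a, …, a)` (first `n - n/ℓ` coordinates `0`, last `n/ℓ` coordinates `a ≥ 0`).
If `v` is a convex combination of finitely many vectors each of which has nonnegative
coordinates, is nondecreasing, and has coordinate sum `(n/ℓ)·a`, then every vector appearing
with positive weight equals `v`. -/
theorem convex_combination_rigidity_of_v
    (ℓ n : ℕ) (hℓ : 0 < ℓ) (hℓn : ℓ ≤ n) (hdvd : ℓ ∣ n)
    (a : ℝ) (ha : 0 ≤ a)
    (N : ℕ) (lam : Fin N → ℝ) (θ : Fin N → Fin n → ℝ)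
    (hlam : ∀ j, 0 ≤ lam j) (hlamsum : ∑ j, lam j = 1)
    (hnonneg : ∀ j i, 0 ≤ θ j i)
    (hmono : ∀ j, Monotone (θ j))
    (hcoordsum : ∀ j, ∑ i, θ j i = ((n / ℓ : ℕ) : ℝ) * a)
    (hconv : (fun i : Fin n => if (i : ℕ) < n - n / ℓ then (0 : ℝ) else a)
      = ∑ j, lam j • θ j) :
    ∀ j, 0 < lam j →
      θ j = fun i : Fin n => if (i : ℕ) < n - n / ℓ then (0 : ℝ) else a := by
  set t := n - n / ℓ with ht
  set m := n / ℓ with hm'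
  have hmpos : 0 < m := Nat.div_pos hℓn hℓ
  have hmle : m ≤ n := Nat.div_le_self n ℓ
  have htm : t + m = n := Nat.sub_add_cancel hmle
  have htn : t < n := by omega
  have hmr : (m : ℝ) = (n : ℝ) - t := by
    have : (t : ℝ) + m = n := by exact_mod_cast congrArg (Nat.cast : ℕ → ℝ) htm
    linarith
  -- pointwise convex combination
  have hv : ∀ i : Fin n, (if (i : ℕ) < t then (0:ℝ) else a) = ∑ j, lam j * θ j i := by
    intro i
    have := congrFun hconv i
    simpa [Finset.sum_apply] using this
  -- zero on the first block
  have hzero : ∀ j, 0 < lam j → ∀ i : Fin n, (i:ℕ) < t → θ j i = 0 := by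
    intro j hj i hi
    have h0 : ∑ j, lam j * θ j i = 0 := by rw [← hv i]; simp [hi]
    have hterm : ∀ j' ∈ Finset.univ, 0 ≤ lam j' * θ j' i := fun j' _ =>
      mul_nonneg (hlam j') (hnonneg j' i)
    have h := (Finset.sum_eq_zero_iff_of_nonneg hterm).mp h0 j (Finset.mem_univ j)
    rcases mul_eq_zero.mp h with h | h
    · exact absurd h (ne_of_gt hj)
    · exact h
  -- counting lemma
  have hcount : ∀ (c : ℝ) (s k : ℕ), s ≤ k → k ≤ n →
      ∑ i : Fin n, (if s ≤ (i:ℕ) ∧ (i:ℕ) < k then c else 0) = ((k:ℝ) - s) * c := by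
    intro c s k hsk hkn
    rw [Fin.sum_univ_eq_sum_range (fun i => if s ≤ i ∧ i < k then c else 0)]
    have h1 : ∀ i, (if s ≤ i ∧ i < k then c else 0) = if i ∈ Finset.Ico s k then c else 0 := by
      intro i; simp [Finset.mem_Ico]
    simp only [h1]
    rw [Finset.sum_ite_mem]
    have h2 : Finset.range n ∩ Finset.Ico s k = Finset.Ico s k := by
      apply Finset.inter_eq_right.mpr
      intro x hx
      simp only [Finset.mem_Ico] at hx
      exact Finset.mem_range.mpr (lt_of_lt_of_le hx.2 hkn)
    rw [h2, Finset.sum_const, Nat.card_Ico, nsmul_eq_mul]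
    rw [Nat.cast_sub hsk]
  -- prefix sums
  set Q : Fin N → ℕ → ℝ := fun j k => ∑ i : Fin n, if (i:ℕ) < k then θ j i else 0 with hQdef
  have hQn : ∀ j, Q j n = (m:ℝ) * a := by
    intro j
    have h : Q j n = ∑ i : Fin n, θ j i := by
      apply Finset.sum_congr rfl; intro i _; simp [i.isLt]
    rw [h, hcoordsum j]
  -- weighted sum of prefix sums
  have hQsum : ∀ k, t ≤ k → k ≤ n → ∑ j, lam j * Q j k = ((k:ℝ) - t) * a := by
    intro k hk1 hk2
    have hswap : ∑ j, lam j * Q j k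
        = ∑ i : Fin n, ∑ j, (if (i:ℕ) < k then lam j * θ j i else 0) := by
      rw [Finset.sum_comm]
      apply Finset.sum_congr rfl; intro j _
      rw [Finset.mul_sum]
      apply Finset.sum_congr rfl; intro i _
      split <;> simp
    rw [hswap]
    have hterm : ∀ i : Fin n, (∑ j, (if (i:ℕ) < k then lam j * θ j i else 0))
        = if t ≤ (i:ℕ) ∧ (i:ℕ) < k then a else 0 := by
      intro i
      by_cases hik : (i:ℕ) < k
      · simp only [if_pos hik]
        rw [← hv i]
        by_cases hit : (i:ℕ) < t
        · simp [not_le.mpr hit]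
        · simp [hit, le_of_not_gt hit, hik]
      · simp [hik]
    rw [Finset.sum_congr rfl (fun i _ => hterm i)]
    exact hcount a t k hk1 hk2
  -- upper bound on prefix sums
  have hQle : ∀ j, 0 < lam j → ∀ k, t ≤ k → k ≤ n → Q j k ≤ ((k:ℝ) - t) * a := by
    intro j hj k hk1 hk2
    rcases eq_or_lt_of_le hk2 with rfl | hk3
    · rw [hQn j, hmr]
    · set K : Fin n := ⟨k, hk3⟩ with hK
      have hb1 : Q j k ≤ ((k:ℝ) - t) * θ j K := by
        have h : Q j k ≤ ∑ i : Fin n, (if t ≤ (i:ℕ) ∧ (i:ℕ) < k then θ j K else 0) := by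
          apply Finset.sum_le_sum; intro i _
          by_cases h1 : (i:ℕ) < k
          · by_cases h2 : (i:ℕ) < t
            · simp [h1, hzero j hj i h2, not_le.mpr h2]
            · have hc : t ≤ (i:ℕ) ∧ (i:ℕ) < k := ⟨le_of_not_gt h2, h1⟩
              simp only [if_pos h1, if_pos hc]
              exact hmono j (le_of_lt (show i < K from Fin.lt_def.mpr h1))
          · simp [h1]
        calc Q j k ≤ _ := h
          _ = ((k:ℝ) - t) * θ j K := hcount (θ j K) t k hk1 hk2
      have hb2 : ((n:ℝ) - k) * θ j K ≤ (m:ℝ) * a - Q j k := by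
        have he : (m:ℝ) * a - Q j k = ∑ i : Fin n, (if (i:ℕ) < k then 0 else θ j i) := by
          rw [← hcoordsum j, ← Finset.sum_sub_distrib]
          apply Finset.sum_congr rfl; intro i _
          split <;> ring
        rw [he, ← hcount (θ j K) k n (le_of_lt hk3) le_rfl]
        apply Finset.sum_le_sum; intro i _
        by_cases h1 : (i:ℕ) < k
        · simp [h1, not_le.mpr h1]
        · have hc : k ≤ (i:ℕ) ∧ (i:ℕ) < n := ⟨le_of_not_gt h1, i.isLt⟩
          simp only [if_neg h1, if_pos hc]
          exact hmono j (show K ≤ i from Fin.le_def.mpr (le_of_not_gt h1))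
      have hnk : (0:ℝ) ≤ (n:ℝ) - k := by
        have : (k:ℝ) ≤ n := by exact_mod_cast le_of_lt hk3
        linarith
      have hkt : (0:ℝ) ≤ (k:ℝ) - t := by
        have : (t:ℝ) ≤ k := by exact_mod_cast hk1
        linarith
      have hnt : (0:ℝ) < (n:ℝ) - t := by
        have : (t:ℝ) < n := by exact_mod_cast htn
        linarith
      rw [hmr] at hb2
      have P1 := mul_le_mul_of_nonneg_left hb1 hnk
      have P2 := mul_le_mul_of_nonneg_left hb2 hkt
      have key : ((n:ℝ) - t) * Q j k ≤ ((n:ℝ) - t) * (((k:ℝ) - t) * a) := by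
        nlinarith [P1, P2]
      exact le_of_mul_le_mul_left key hnt
  -- equality of prefix sums
  have hQeq : ∀ j, 0 < lam j → ∀ k, t ≤ k → k ≤ n → Q j k = ((k:ℝ) - t) * a := by
    intro j hj k hk1 hk2
    have hsum0 : ∑ j', lam j' * (((k:ℝ) - t) * a - Q j' k) = 0 := by
      have : ∑ j', lam j' * (((k:ℝ) - t) * a - Q j' k)
          = (∑ j', lam j') * (((k:ℝ) - t) * a) - ∑ j', lam j' * Q j' k := by
        rw [Finset.sum_mul, ← Finset.sum_sub_distrib]
        apply Finset.sum_congr rfl; intro j' _; ring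
      rw [this, hlamsum, hQsum k hk1 hk2]; ring
    have hterm : ∀ j' ∈ Finset.univ, 0 ≤ lam j' * (((k:ℝ) - t) * a - Q j' k) := by
      intro j' _
      rcases eq_or_lt_of_le (hlam j') with h | h
      · rw [← h]; simp
      · exact mul_nonneg (le_of_lt h) (by linarith [hQle j' h k hk1 hk2])
    have h := (Finset.sum_eq_zero_iff_of_nonneg hterm).mp hsum0 j (Finset.mem_univ j)
    rcases mul_eq_zero.mp h with h | h
    · exact absurd h (ne_of_gt hj)
    · linarith
  -- conclusion
  intro j hj
  funext i
  by_cases hi : (i:ℕ) < t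
  · simp only [if_pos hi]
    exact hzero j hj i hi
  · simp only [if_neg hi]
    have hti : t ≤ (i:ℕ) := le_of_not_gt hi
    have hi1 : (i:ℕ) + 1 ≤ n := i.isLt
    have h1 : Q j ((i:ℕ) + 1) = (((i:ℕ) + 1 : ℕ) : ℝ) * a - (t:ℝ) * a := by
      rw [hQeq j hj ((i:ℕ)+1) (le_trans hti (Nat.le_succ _)) hi1]; ring
    have h2 : Q j (i:ℕ) = ((i:ℕ) : ℝ) * a - (t:ℝ) * a := by
      rw [hQeq j hj (i:ℕ) hti (le_of_lt i.isLt)]; ring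
    have hdiff : Q j ((i:ℕ) + 1) - Q j (i:ℕ) = θ j i := by
      show (∑ i' : Fin n, if (i':ℕ) < (i:ℕ)+1 then θ j i' else 0)
          - (∑ i' : Fin n, if (i':ℕ) < (i:ℕ) then θ j i' else 0) = θ j i
      rw [← Finset.sum_sub_distrib]
      have hterm : ∀ i' : Fin n,
          (if (i':ℕ) < (i:ℕ)+1 then θ j i' else 0) - (if (i':ℕ) < (i:ℕ) then θ j i' else 0)
          = if i' = i then θ j i' else 0 := by
        intro i'
        rcases lt_trichotomy ((i':ℕ)) ((i:ℕ)) with h | h | h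
        · have hne : i' ≠ i := Fin.ne_of_val_ne (ne_of_lt h)
          simp [h, Nat.lt_succ_of_lt h, hne]
        · have heq : i' = i := Fin.ext h
          simp [heq, Nat.lt_irrefl]
        · have hne : i' ≠ i := Fin.ne_of_val_ne (ne_of_gt h)
          have h1' : ¬ ((i':ℕ) < (i:ℕ) + 1) := by omega
          have h2' : ¬ ((i':ℕ) < (i:ℕ)) := by omega
          simp [h1', h2', hne]
      rw [Finset.sum_congr rfl (fun i' _ => hterm i')]
      simp
    rw [← hdiff, h1, h2]
    push_cast
    ring
end

section
/- Let ℓ and n be natural numbers with 0 < ℓ ≤ n and ℓ dividing n, let w₁, …, wₙ be nonnegative reals with average a = (1/n)·∑_{i=1}^n wᵢ, and consider n papers where paper i has ℓ weight entries: one entry of value wᵢ and ℓ − 1 entries of value 0. If there exists a valid assignment of the weight entries to the n reviewers whose sorted mean-weight vector equals the vector v ∈ ℝⁿ whose first n − n/ℓ coordinates are 0 and whose last n/ℓ coordinates are a, then the multiset {w₁, …, wₙ} can be partitioned into n/ℓ sub-multisets each of cardinality ℓ and each of sum ℓ·a. -/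
/-!
The entry of value `wᵢ` of paper `i` is the only one that can be nonzero, so the mean weight of
reviewer `j` is `1/ℓ` times the sum of the `wᵢ` whose nonzero entry went to `j`; there are at
most `ℓ` of those. Matching the reviewers with `v`, the `n/ℓ` reviewers of mean `a` carry groups
of sum `ℓ·a`, while the others carry groups of sum `0`, hence (by nonnegativity) only zeros. The
zeros fill the groups of the first kind up to size `ℓ`: a counting argument shows there are
exactly enough of them, because `(n/ℓ)·ℓ = n`.
-/

open Finset

theorem exists_equiv_of_map_univ_eq {α β γ : Type*} [Fintype α] [Fintype β] [DecidableEq γ]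
    {F : α → γ} {G : β → γ} (h : univ.val.map F = univ.val.map G) :
    ∃ e : α ≃ β, ∀ a, G (e a) = F a := by
  classical
  have hfiber (c : γ) : Fintype.card {a // F a = c} = Fintype.card {b // G b = c} := by
    have hc := congrArg (Multiset.count c) h
    simp only [Multiset.count_map, eq_comm (a := c)] at hc
    simpa only [Fintype.card_subtype, card_def, filter_val] using hc
  exact ⟨Equiv.ofFiberEquiv fun c => Fintype.equivOfCardEq (hfiber c), Equiv.ofFiberEquiv_map _⟩

theorem Finset.sum_map_val_fiberwise {ι κ β : Type*} [Fintype ι] [Fintype κ] [DecidableEq κ]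
    (g : ι → κ) (w : ι → β) :
    ∑ j, (univ.filter (g · = j)).val.map w = univ.val.map w := by
  classical
  have h := sum_fiberwise univ g fun i => ({i} : Multiset ι)
  simp only [sum_multiset_singleton] at h
  rw [← h, ← Multiset.coe_mapAddMonoidHom, map_sum]

theorem Fin.card_filter_not_val_lt {n : ℕ} (k : ℕ) : #{i : Fin n | ¬ (i : ℕ) < k} = n - k := by
  have h := card_filter_add_card_filter_not (s := (univ : Finset (Fin n))) fun i => (i : ℕ) < k
  rw [Fin.card_filter_val_lt, card_univ, Fintype.card_fin] at h
  omega

theorem exists_regroup_padding_zeros {α κ : Type*} [AddCommMonoid α] [Fintype κ]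
    (M : κ → Multiset α) (A : Finset κ) {m ℓ : ℕ} (hA : #A = m) (s : α)
    (hcard : ∀ j ∈ A, Multiset.card (M j) ≤ ℓ) (hsum : ∀ j ∈ A, (M j).sum = s)
    (hzero : ∀ j ∉ A, ∀ x ∈ M j, x = 0) (htot : ∑ j, Multiset.card (M j) = m * ℓ) :
    ∃ P : Fin m → Multiset α,
      (∀ t, Multiset.card (P t) = ℓ) ∧ (∀ t, (P t).sum = s) ∧ ∑ t, P t = ∑ j, M j := by
  classical
  subst hA
  set c : κ → ℕ := fun j => Multiset.card (M j)
  have hpad : ∑ j ∈ A, (ℓ - c j) = ∑ j ∈ Aᶜ, c j := by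
    have h : ∑ j ∈ A, (ℓ - c j) + ∑ j ∈ A, c j = #A * ℓ := by
      rw [← sum_add_distrib, sum_congr rfl fun j hj => tsub_add_cancel_of_le (hcard j hj),
        sum_const, smul_eq_mul]
    rw [← sum_add_sum_compl A c] at htot
    omega
  have hzeros : ∑ j ∈ Aᶜ, M j = Multiset.replicate (∑ j ∈ A, (ℓ - c j)) 0 := by
    refine Multiset.eq_replicate.2 ⟨by rw [Multiset.card_sum, hpad], fun x hx => ?_⟩
    obtain ⟨j, hj, hxj⟩ := Multiset.mem_sum.1 hx
    exact hzero j (mem_compl.1 hj) x hxj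
  set e : Fin #A ≃ A := A.equivFin.symm
  have hreindexM : ∑ t, M (e t) = ∑ j ∈ A, M j :=
    (e.sum_comp fun j : A => M j).trans (sum_coe_sort A M)
  have hreindexc : ∑ t, (ℓ - c (e t)) = ∑ j ∈ A, (ℓ - c j) :=
    (e.sum_comp fun j : A => ℓ - c j).trans (sum_coe_sort A fun j => ℓ - c j)
  refine ⟨fun t => M (e t) + Multiset.replicate (ℓ - c (e t)) 0, fun t => ?_, fun t => ?_, ?_⟩
  · rw [Multiset.card_add, Multiset.card_replicate]
    exact add_tsub_cancel_of_le (hcard _ (e t).2)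
  · rw [Multiset.sum_add, Multiset.sum_replicate, nsmul_zero, add_zero]
    exact hsum _ (e t).2
  · change ∑ t, (M (e t) + Multiset.replicateAddMonoidHom 0 (ℓ - c (e t))) = _
    rw [sum_add_distrib, ← map_sum, hreindexM, hreindexc, ← sum_add_sum_compl A M, hzeros]
    rfl

theorem card_filter_le_of_validAssign {m k n ℓ : ℕ} {f : Fin m × Fin k → Fin n}
    (hf : ValidAssign m k n ℓ f) (s : Fin k) (j : Fin n) :
    #{i | f (i, s) = j} ≤ ℓ := by
  rw [← hf.1 j]
  exact card_le_card_of_injOn (fun i => (i, s)) (fun i hi => by simpa using hi)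
    fun i _ i' _ h => (Prod.mk.inj h).1

theorem meanWeight_single_entry {m k n ℓ : ℕ} (hk : 0 < k) (w : Fin m → ℝ)
    (f : Fin m × Fin k → Fin n) (j : Fin n) :
    meanWeight m k n ℓ (fun e => if (e.2 : ℕ) = 0 then w e.1 else 0) f j
      = (1 / (ℓ : ℝ)) * ∑ i with f (i, ⟨0, hk⟩) = j, w i := by
  unfold meanWeight
  rw [sum_filter, sum_filter, Fintype.sum_prod_type]
  congr 1
  refine sum_congr rfl fun i _ => ?_
  rw [Fintype.sum_eq_single ⟨0, hk⟩ fun s hs => ?_]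
  · simp
  · have hs0 : (s : ℕ) ≠ 0 := fun h => hs (Fin.ext h)
    simp [hs0]

theorem assignment_with_sorted_mean_vector_v_gives_partition_general
    (ℓ n : ℕ) (hℓ : 0 < ℓ) (hdvd : ℓ ∣ n)
    (w : Fin n → ℝ) (hw : ∀ i, 0 ≤ w i)
    (a : ℝ)
    (f : Fin n × Fin ℓ → Fin n)
    (hf : ValidAssign n ℓ n ℓ f)
    (hmeans : Multiset.map
        (meanWeight n ℓ n ℓ (fun e => if (e.2 : ℕ) = 0 then w e.1 else 0) f)
        (Finset.univ : Finset (Fin n)).val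
      = Multiset.map (fun i : Fin n => if (i : ℕ) < n - n / ℓ then (0 : ℝ) else a)
          (Finset.univ : Finset (Fin n)).val) :
    ∃ P : Fin (n / ℓ) → Multiset ℝ,
      (∀ t, (P t).card = ℓ) ∧
      (∀ t, (P t).sum = (ℓ : ℝ) * a) ∧
      ∑ t : Fin (n / ℓ), P t = Multiset.map w (Finset.univ : Finset (Fin n)).val := by
  classical
  set S : Fin n → Finset (Fin n) := fun j => {i | f (i, ⟨0, hℓ⟩) = j}
  obtain ⟨σ, hσ⟩ := exists_equiv_of_map_univ_eq hmeans
  set A : Finset (Fin n) := {j | ¬ (σ j : ℕ) < n - n / ℓ}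
  have hA : #A = n / ℓ := by
    rw [card_equiv σ (t := {i : Fin n | ¬ (i : ℕ) < n - n / ℓ}) fun j => by simp [A],
      Fin.card_filter_not_val_lt, Nat.sub_sub_self (Nat.div_le_self n ℓ)]
  have hmean (j : Fin n) :
      ∑ i ∈ S j, w i = ℓ * if (σ j : ℕ) < n - n / ℓ then 0 else a := by
    rw [hσ j, meanWeight_single_entry hℓ, ← mul_assoc, mul_one_div_cancel (by positivity),
      one_mul]
  have hpartition : ∑ j, (S j).val.map w = univ.val.map w :=
    sum_map_val_fiberwise (fun i => f (i, ⟨0, hℓ⟩)) w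
  have hsum (j : Fin n) (hj : j ∈ A) : ((S j).val.map w).sum = ℓ * a := by
    rw [← sum_eq_multiset_sum, hmean, if_neg (mem_filter.1 hj).2]
  have hzero (j : Fin n) (hj : j ∉ A) (x : ℝ) (hx : x ∈ (S j).val.map w) : x = 0 := by
    have hS0 : ∑ i ∈ S j, w i = 0 := by
      rw [hmean, if_pos (by simpa only [A, mem_filter, mem_univ, true_and, not_not] using hj),
        mul_zero]
    obtain ⟨i, hi, rfl⟩ := Multiset.mem_map.1 hx
    exact (sum_eq_zero_iff_of_nonneg fun i _ => hw i).1 hS0 i hi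
  have htot : ∑ j, Multiset.card ((S j).val.map w) = n / ℓ * ℓ := by
    rw [← Multiset.card_sum, hpartition, Multiset.card_map, card_val, card_univ,
      Fintype.card_fin, Nat.div_mul_cancel hdvd]
  obtain ⟨P, hPcard, hPsum, hPtot⟩ := exists_regroup_padding_zeros _ A hA _
    (fun j _ => by simpa using card_filter_le_of_validAssign hf _ j) hsum hzero htot
  exact ⟨P, hPcard, hPsum, hPtot.trans hpartition⟩

/-- Backward direction of the NP-hardness reduction: in the setting where paper `i` has one
entry of value `w i ≥ 0` and `ℓ - 1` zero entries, if some valid assignment has sorted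
mean-weight vector `v = (0, …, 0, a, …, a)` (with `n/ℓ` trailing `a`'s, `a` the average of the
`wᵢ`), then the multiset `{w₁, …, wₙ}` can be partitioned into `n/ℓ` sub-multisets each of
cardinality `ℓ` and sum `ℓ·a`. -/
theorem assignment_with_sorted_mean_vector_v_gives_partition
    (ℓ n : ℕ) (hℓ : 0 < ℓ) (hℓn : ℓ ≤ n) (hdvd : ℓ ∣ n)
    (w : Fin n → ℝ) (hw : ∀ i, 0 ≤ w i)
    (a : ℝ) (ha : a = (1 / (n : ℝ)) * ∑ i, w i)
    (f : Fin n × Fin ℓ → Fin n)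
    (hf : ValidAssign n ℓ n ℓ f)
    (hmeans : Multiset.map
        (meanWeight n ℓ n ℓ (fun e => if (e.2 : ℕ) = 0 then w e.1 else 0) f)
        (Finset.univ : Finset (Fin n)).val
      = Multiset.map (fun i : Fin n => if (i : ℕ) < n - n / ℓ then (0 : ℝ) else a)
          (Finset.univ : Finset (Fin n)).val) :
    ∃ P : Fin (n / ℓ) → Multiset ℝ,
      (∀ t, (P t).card = ℓ) ∧
      (∀ t, (P t).sum = (ℓ : ℝ) * a) ∧
      ∑ t : Fin (n / ℓ), P t = Multiset.map w (Finset.univ : Finset (Fin n)).val :=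
  assignment_with_sorted_mean_vector_v_gives_partition_general ℓ n hℓ hdvd w hw a f hf hmeans
end

section
/- Let ℓ and n be natural numbers with 2 < ℓ ≤ n and ℓ dividing n, let w₁, …, wₙ be nonnegative reals with average a = (1/n)·∑_{i=1}^n wᵢ, and consider n papers where paper i has ℓ weight entries: one entry of value wᵢ and ℓ − 1 entries of value 0. Let Θ ⊆ ℝⁿ be the set of sorted mean-weight vectors of all valid assignments of the weight entries to the n reviewers, and let v ∈ ℝⁿ be the vector whose first n − n/ℓ coordinates are 0 and whose last n/ℓ coordinates are a. Then v lies in the convex hull of Θ if and only if the multiset {w₁, …, wₙ} can be partitioned into n/ℓ sub-multisets each of cardinality ℓ and each of sum ℓ·a. -/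
/-- The set `Θ` of sorted mean-weight vectors of all valid assignments: a vector `θ` lies in
`Θ` iff it is nondecreasing and its coordinates form the same multiset as the reviewer mean
weights of some valid assignment. -/
def sortedMeanVecSet (m k n ℓ : ℕ) (x : Fin m × Fin k → ℝ) : Set (Fin n → ℝ) :=
  {θ | Monotone θ ∧ ∃ f : Fin m × Fin k → Fin n, ValidAssign m k n ℓ f ∧
    Multiset.map θ (Finset.univ : Finset (Fin n)).val
      = Multiset.map (meanWeight m k n ℓ x f) (Finset.univ : Finset (Fin n)).val}

open Finset

/-! Write `q = n / ℓ`. Every `θ ∈ Θ` is nondecreasing, nonnegative and has coordinate sum `q a`.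
On such vectors the linear functional `topGap` (the first `n - q` coordinates plus the gaps
`θ_last - θ_j` over the last `q` coordinates) is nonnegative and vanishes only at `v`, so `v` is
not a proper convex combination of points of `Θ`: `v ∈ conv Θ` forces `v ∈ Θ`.

If a valid assignment realises `v`, the `q` reviewers of mean `a` each receive `ℓ` values summing
to `ℓ a` and all other reviewers receive only zeros. All entry values together are the `w i` plus
zeros, so after cancelling zeros the values received by the `q` reviewers of mean `a` partition
`{w₁, …, wₙ}`. Conversely, arrange the papers in a `q × ℓ` grid whose rows are the parts of a
partition, and send entry `s` of every paper of row `u` to reviewer `(u, s)`: reviewer `(u, 0)`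
receives the weights of row `u`, all others receive zeros. -/

theorem mem_of_mem_convexHull_of_lt {𝕜 E : Type*} [Field 𝕜] [LinearOrder 𝕜]
    [IsStrictOrderedRing 𝕜] [AddCommGroup E] [Module 𝕜 E] {s : Set E} {x : E} {G : E → 𝕜}
    (hG : IsLinearMap 𝕜 G) (hx : x ∈ convexHull 𝕜 s)
    (hlt : ∀ y ∈ s, y ≠ x → G x < G y) : x ∈ s := by
  by_contra hxs
  have hsub : s ⊆ {y | G x < G y} := fun y hy => hlt y hy (ne_of_mem_of_not_mem hy hxs)
  exact lt_irrefl (G x) (convexHull_min hsub (convex_halfSpace_gt hG _) hx)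

theorem exists_equiv_comp_eq_of_map_univ_eq {α β γ : Type*} [Fintype α] [Fintype β]
    [DecidableEq γ] {f : α → γ} {g : β → γ} (h : univ.val.map f = univ.val.map g) :
    ∃ e : α ≃ β, ∀ a, g (e a) = f a := by
  have hcard : ∀ c, Fintype.card {a // f a = c} = Fintype.card {b // g b = c} := fun c => by
    simpa [Multiset.count_map, Fintype.card_subtype, eq_comm, card_def, filter_val] using
      congrArg (Multiset.count c) h
  exact ⟨Equiv.ofFiberEquiv fun c => Fintype.equivOfCardEq (hcard c), Equiv.ofFiberEquiv_map _⟩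

theorem Multiset.exists_fin_map_eq {α : Type*} {s : Multiset α} {k : ℕ} (h : card s = k) :
    ∃ f : Fin k → α, univ.val.map f = s := by
  obtain ⟨l, rfl⟩ : ∃ l : List α, (l : Multiset α) = s := Quot.exists_rep s
  rw [Multiset.coe_card] at h
  subst h
  exact ⟨l.get, by rw [Fin.univ_val_map, List.ofFn_get]⟩

theorem Finset.val_map_eq_sum_singleton {α β : Type*} (s : Finset α) (f : α → β) :
    s.val.map f = ∑ a ∈ s, {f a} := by
  rw [sum_eq_multiset_sum, ← Multiset.sum_map_singleton (s.val.map f), Multiset.map_map]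
  rfl

theorem Fin.sum_eq_add_nsmul {M : Type*} [AddCommMonoid M] {k : ℕ} [NeZero k] {F : Fin k → M}
    {c : M} (h : ∀ s, s ≠ 0 → F s = c) : ∑ s, F s = F 0 + (k - 1) • c := by
  classical
  rw [Fintype.sum_eq_add_sum_compl 0, sum_congr rfl fun s hs => h s (by simpa using hs),
    Finset.sum_const, card_compl, card_singleton, Fintype.card_fin]

section Assignment

variable {m k n ℓ : ℕ}

def assignedValues (x : Fin m × Fin k → ℝ) (f : Fin m × Fin k → Fin n) (j : Fin n) :
    Multiset ℝ :=
  (univ.filter fun e => f e = j).val.map x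

theorem card_assignedValues {f : Fin m × Fin k → Fin n} (hf : ValidAssign m k n ℓ f)
    (x : Fin m × Fin k → ℝ) (j : Fin n) : Multiset.card (assignedValues x f j) = ℓ := by
  rw [assignedValues, Multiset.card_map, ← card_def, hf.1 j]

theorem sum_assignedValues [NeZero ℓ] (x : Fin m × Fin k → ℝ) (f : Fin m × Fin k → Fin n)
    (j : Fin n) : (assignedValues x f j).sum = ℓ * meanWeight m k n ℓ x f j := by
  have hℓ : (ℓ : ℝ) ≠ 0 := Nat.cast_ne_zero.2 (NeZero.ne ℓ)
  rw [assignedValues, meanWeight, ← sum_eq_multiset_sum]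
  field_simp

theorem sum_univ_assignedValues (x : Fin m × Fin k → ℝ) (f : Fin m × Fin k → Fin n) :
    ∑ j, assignedValues x f j = univ.val.map x := by
  simp only [assignedValues, val_map_eq_sum_singleton, sum_fiberwise]

theorem meanWeight_nonneg {x : Fin m × Fin k → ℝ} (hx : ∀ e, 0 ≤ x e)
    (f : Fin m × Fin k → Fin n) (j : Fin n) : 0 ≤ meanWeight m k n ℓ x f j :=
  mul_nonneg (by positivity) (sum_nonneg fun e _ => hx e)

theorem assignedValues_eq_replicate_zero [NeZero ℓ] {x : Fin m × Fin k → ℝ}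
    (hx : ∀ e, 0 ≤ x e) {f : Fin m × Fin k → Fin n} (hf : ValidAssign m k n ℓ f) {j : Fin n}
    (h : meanWeight m k n ℓ x f j = 0) : assignedValues x f j = Multiset.replicate ℓ 0 := by
  have hsum : ∑ e ∈ univ.filter (fun e => f e = j), x e = 0 := by
    rw [sum_eq_multiset_sum, ← assignedValues, sum_assignedValues (ℓ := ℓ), h, mul_zero]
  refine Multiset.eq_replicate.2 ⟨card_assignedValues hf x j, fun b hb => ?_⟩
  obtain ⟨e, he, rfl⟩ := Multiset.mem_map.1 hb
  exact (sum_eq_zero_iff_of_nonneg fun e _ => hx e).1 hsum e he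

theorem sum_meanWeight (x : Fin m × Fin k → ℝ) (f : Fin m × Fin k → Fin n) :
    ∑ j, meanWeight m k n ℓ x f j = (1 / ℓ) * ∑ e, x e := by
  simp only [meanWeight, ← mul_sum, sum_fiberwise]

theorem sum_eq_of_mem_sortedMeanVecSet {x : Fin m × Fin k → ℝ} {θ : Fin n → ℝ}
    (hθ : θ ∈ sortedMeanVecSet m k n ℓ x) : ∑ j, θ j = (1 / ℓ) * ∑ e, x e := by
  obtain ⟨-, f, -, hmap⟩ := hθ
  rw [sum_eq_multiset_sum, hmap, ← sum_eq_multiset_sum, sum_meanWeight]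

theorem nonneg_of_mem_sortedMeanVecSet {x : Fin m × Fin k → ℝ} (hx : ∀ e, 0 ≤ x e)
    {θ : Fin n → ℝ} (hθ : θ ∈ sortedMeanVecSet m k n ℓ x) (j : Fin n) : 0 ≤ θ j := by
  obtain ⟨-, f, -, hmap⟩ := hθ
  have hj : θ j ∈ univ.val.map (meanWeight m k n ℓ x f) :=
    hmap ▸ Multiset.mem_map_of_mem θ (mem_univ_val j)
  obtain ⟨j', -, hj'⟩ := Multiset.mem_map.1 hj
  exact hj' ▸ meanWeight_nonneg hx f j'

variable {q : ℕ}

def gridAssign (φ : Fin m ≃ Fin q × Fin ℓ) (ρ : Fin q × Fin k ≃ Fin n) (e : Fin m × Fin k) :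
    Fin n :=
  ρ ((φ e.1).1, e.2)

theorem filter_gridAssign_eq (φ : Fin m ≃ Fin q × Fin ℓ) (ρ : Fin q × Fin k ≃ Fin n)
    (u : Fin q) (s : Fin k) :
    univ.filter (fun e => gridAssign φ ρ e = ρ (u, s))
      = univ.image fun p => (φ.symm (u, p), s) := by
  ext ⟨i, s'⟩
  simp only [gridAssign, mem_filter, mem_univ, true_and, mem_image, ρ.apply_eq_iff_eq,
    Prod.ext_iff, Equiv.symm_apply_eq]
  constructor
  · rintro ⟨rfl, rfl⟩
    exact ⟨(φ i).2, ⟨rfl, rfl⟩, rfl⟩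
  · rintro ⟨p, ⟨rfl, -⟩, rfl⟩
    exact ⟨rfl, rfl⟩

theorem validAssign_gridAssign (φ : Fin m ≃ Fin q × Fin ℓ) (ρ : Fin q × Fin k ≃ Fin n) :
    ValidAssign m k n ℓ (gridAssign φ ρ) := by
  refine ⟨fun j => ?_, fun i s s' h => by simpa [gridAssign] using h⟩
  obtain ⟨⟨u, s⟩, rfl⟩ := ρ.surjective j
  rw [filter_gridAssign_eq, card_image_of_injective _ fun p p' h => by simpa using h, card_univ,
    Fintype.card_fin]

theorem meanWeight_gridAssign (φ : Fin m ≃ Fin q × Fin ℓ) (ρ : Fin q × Fin k ≃ Fin n)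
    (x : Fin m × Fin k → ℝ) (u : Fin q) (s : Fin k) :
    meanWeight m k n ℓ x (gridAssign φ ρ) (ρ (u, s)) = (1 / ℓ) * ∑ p, x (φ.symm (u, p), s) := by
  rw [meanWeight, filter_gridAssign_eq, sum_image fun p _ p' _ h => by simpa using h]

end Assignment

section EntryValue

variable {m k : ℕ}

def entryValue (w : Fin m → ℝ) (e : Fin m × Fin k) : ℝ :=
  if (e.2 : ℕ) = 0 then w e.1 else 0

theorem entryValue_nonneg {w : Fin m → ℝ} (hw : ∀ i, 0 ≤ w i) (e : Fin m × Fin k) :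
    0 ≤ entryValue w e := by
  unfold entryValue
  split_ifs
  exacts [hw _, le_rfl]

variable [NeZero k]

@[simp]
theorem entryValue_zero (w : Fin m → ℝ) (i : Fin m) : entryValue w (i, (0 : Fin k)) = w i := by
  simp [entryValue]

theorem entryValue_of_ne_zero (w : Fin m → ℝ) (i : Fin m) {s : Fin k} (hs : s ≠ 0) :
    entryValue w (i, s) = 0 := by
  simp [entryValue, Fin.val_eq_zero_iff, hs]

theorem sum_entryValue (w : Fin m → ℝ) : ∑ e : Fin m × Fin k, entryValue w e = ∑ i, w i := by
  simp [Fintype.sum_prod_type, entryValue, Fin.val_eq_zero_iff]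

theorem map_entryValue (w : Fin m → ℝ) :
    univ.val.map (entryValue (k := k) w) = univ.val.map w + Multiset.replicate (m * (k - 1)) 0 := by
  have hrow : ∀ i, ∑ s : Fin k, ({entryValue w (i, s)} : Multiset ℝ)
      = {w i} + Multiset.replicate (k - 1) 0 := fun i => by
    rw [Fin.sum_eq_add_nsmul (c := {0}) fun s hs => by rw [entryValue_of_ne_zero w i hs],
      entryValue_zero, Multiset.nsmul_singleton]
  rw [val_map_eq_sum_singleton, val_map_eq_sum_singleton, Fintype.sum_prod_type]
  simp_rw [hrow]
  rw [sum_add_distrib, Finset.sum_const, card_univ, Fintype.card_fin, Multiset.nsmul_replicate]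

end EntryValue

section TopVector

variable {n q : ℕ}

def topVector (n q : ℕ) (a : ℝ) (j : Fin n) : ℝ :=
  if (j : ℕ) < n - q then 0 else a

theorem topVector_monotone {a : ℝ} (ha : 0 ≤ a) : Monotone (topVector n q a) := by
  intro i j hij
  unfold topVector
  split_ifs with hi hj hj
  exacts [le_rfl, ha, absurd (lt_of_le_of_lt (Fin.le_def.1 hij) hj) hi, le_rfl]

theorem sum_topVector (hq : q ≤ n) (a : ℝ) : ∑ j, topVector n q a j = q * a := by
  have hcard : #{j : Fin n | ¬ (j : ℕ) < n - q} = q := by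
    rw [filter_not, card_sdiff_of_subset (filter_subset _ _), Fin.card_filter_val_lt, card_univ,
      Fintype.card_fin]
    omega
  simp only [topVector, sum_ite, sum_const_zero, Finset.sum_const, hcard, nsmul_eq_mul, zero_add]

def reviewerGrid {ℓ : ℕ} (hn : q * ℓ = n) : Fin q × Fin ℓ ≃ Fin n :=
  ((Equiv.refl _).prodCongr Fin.revPerm).trans
    ((Equiv.prodComm _ _).trans (finProdFinEquiv.trans (finCongr (by rw [mul_comm, hn]))))

theorem val_reviewerGrid {ℓ : ℕ} (hn : q * ℓ = n) (u : Fin q) (s : Fin ℓ) :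
    (reviewerGrid hn (u, s) : ℕ) = u + q * (ℓ - 1 - s) := by
  change (u : ℕ) + q * (ℓ - (s + 1)) = _
  rw [Nat.sub_sub, Nat.add_comm 1]

theorem topVector_reviewerGrid {ℓ : ℕ} [NeZero ℓ] (hn : q * ℓ = n) (a : ℝ) (u : Fin q)
    (s : Fin ℓ) : topVector n q a (reviewerGrid hn (u, s)) = if s = 0 then a else 0 := by
  have hrow : q * (ℓ - 1) + q = n := by
    rw [← Nat.mul_succ, Nat.succ_eq_add_one, Nat.sub_add_cancel (NeZero.pos ℓ), hn]
  have hu := u.2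
  unfold topVector
  rw [val_reviewerGrid]
  by_cases hs : s = 0
  · subst hs
    rw [if_pos rfl, if_neg (by rw [Fin.val_zero, Nat.sub_zero]; omega)]
  · have hs' : 0 < (s : ℕ) := Nat.pos_of_ne_zero (Fin.val_ne_zero_iff.2 hs)
    have hlow : q * (ℓ - 1 - s) + q ≤ q * (ℓ - 1) := by
      rw [← Nat.mul_succ]
      exact Nat.mul_le_mul_left _ (by omega)
    rw [if_neg hs, if_pos (by omega)]

def topGap (q : ℕ) (last : Fin n) (θ : Fin n → ℝ) : ℝ :=
  ∑ j : Fin n, if (j : ℕ) < n - q then θ j else θ last - θ j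

theorem isLinearMap_topGap (last : Fin n) : IsLinearMap ℝ (topGap q last) := by
  constructor
  · intro θ θ'
    simp only [topGap, ← sum_add_distrib, Pi.add_apply]
    exact sum_congr rfl fun j _ => by split_ifs <;> ring
  · intro c θ
    simp only [topGap, Pi.smul_apply, smul_eq_mul, mul_sum]
    exact sum_congr rfl fun j _ => by split_ifs <;> ring

theorem topGap_topVector {last : Fin n} (hlast : n - q ≤ last) (a : ℝ) :
    topGap q last (topVector n q a) = 0 := by
  refine sum_eq_zero fun j _ => ?_
  simp only [topVector, if_neg (not_lt.2 hlast)]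
  split_ifs <;> simp

theorem topGap_pos {last : Fin n} (hlast : ∀ j, j ≤ last) (hq : 0 < q) (hqn : q ≤ n) {a : ℝ}
    {θ : Fin n → ℝ} (hmono : Monotone θ) (hθ : ∀ j, 0 ≤ θ j) (hsum : ∑ j, θ j = q * a)
    (hne : θ ≠ topVector n q a) : 0 < topGap q last θ := by
  have hterm : ∀ j : Fin n, 0 ≤ if (j : ℕ) < n - q then θ j else θ last - θ j := fun j => by
    split_ifs
    exacts [hθ j, sub_nonneg.2 (hmono (hlast j))]
  refine (sum_nonneg fun j _ => hterm j).lt_of_ne fun h0 => hne ?_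
  have hzero := (sum_eq_zero_iff_of_nonneg fun j _ => hterm j).1 h0.symm
  have hθ' : θ = topVector n q (θ last) := funext fun j => by
    have := hzero j (mem_univ j)
    unfold topVector
    split_ifs at this ⊢ <;> linarith
  have hlast_eq : θ last = a := by
    rw [hθ', sum_topVector hqn] at hsum
    exact mul_left_cancel₀ (by positivity) hsum
  rw [hθ', hlast_eq]

end TopVector

section Reduction

variable {n ℓ q : ℕ} [NeZero ℓ] {w : Fin n → ℝ} {a : ℝ}

theorem topVector_mem_of_mem_convexHull (hn : q * ℓ = n) (hq : 0 < q) (hw : ∀ i, 0 ≤ w i)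
    (hsum : ∑ i, w i = n * a)
    (h : topVector n q a ∈ convexHull ℝ (sortedMeanVecSet n ℓ n ℓ (entryValue w))) :
    topVector n q a ∈ sortedMeanVecSet n ℓ n ℓ (entryValue w) := by
  have hqn : q ≤ n := hn ▸ Nat.le_mul_of_pos_right q (NeZero.pos ℓ)
  let last : Fin n := ⟨n - 1, by omega⟩
  refine mem_of_mem_convexHull_of_lt (isLinearMap_topGap (q := q) last) h fun θ hθ hne => ?_
  rw [topGap_topVector (by simp only [last]; omega)]
  refine topGap_pos (fun j => Fin.le_def.2 (by simp only [last]; omega)) hq hqn hθ.1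
    (nonneg_of_mem_sortedMeanVecSet (entryValue_nonneg hw) hθ) ?_ hne
  have hℓ : (ℓ : ℝ) ≠ 0 := Nat.cast_ne_zero.2 (NeZero.ne ℓ)
  rw [sum_eq_of_mem_sortedMeanVecSet hθ, sum_entryValue, hsum, ← hn, Nat.cast_mul]
  field_simp

theorem exists_partition_of_topVector_mem (hn : q * ℓ = n) (hw : ∀ i, 0 ≤ w i)
    (h : topVector n q a ∈ sortedMeanVecSet n ℓ n ℓ (entryValue w)) :
    ∃ P : Fin q → Multiset ℝ, (∀ t, Multiset.card (P t) = ℓ) ∧ (∀ t, (P t).sum = ℓ * a) ∧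
      ∑ t, P t = univ.val.map w := by
  obtain ⟨-, f, hf, hmap⟩ := h
  obtain ⟨σ, hσ⟩ := exists_equiv_comp_eq_of_map_univ_eq hmap
  let A : Fin q × Fin ℓ → Multiset ℝ :=
    fun us => assignedValues (entryValue w) f (σ (reviewerGrid hn us))
  have hmean : ∀ u s, meanWeight n ℓ n ℓ (entryValue w) f (σ (reviewerGrid hn (u, s)))
      = if s = 0 then a else 0 := fun u s => by rw [hσ, topVector_reviewerGrid]
  have hzero : ∀ u s, s ≠ 0 → A (u, s) = Multiset.replicate ℓ 0 := fun u s hs =>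
    assignedValues_eq_replicate_zero (entryValue_nonneg hw) hf (by rw [hmean, if_neg hs])
  refine ⟨fun u => A (u, 0), fun u => card_assignedValues hf _ _,
    fun u => by rw [sum_assignedValues (ℓ := ℓ), hmean, if_pos rfl], ?_⟩
  have hsplit : ∑ us, A us = ∑ u, A (u, 0) + Multiset.replicate (n * (ℓ - 1)) 0 := by
    rw [Fintype.sum_prod_type]
    simp_rw [Fin.sum_eq_add_nsmul (hzero _)]
    rw [sum_add_distrib, Finset.sum_const, card_univ, Fintype.card_fin, Multiset.nsmul_replicate,
      Multiset.nsmul_replicate, ← hn]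
    ring_nf
  have htotal : ∑ us, A us = univ.val.map w + Multiset.replicate (n * (ℓ - 1)) 0 := by
    rw [← map_entryValue, ← sum_univ_assignedValues _ f]
    exact (reviewerGrid hn |>.trans σ).sum_comp (assignedValues (entryValue w) f)
  exact add_right_cancel (hsplit.symm.trans htotal)

theorem topVector_mem_of_partition (hn : q * ℓ = n) (ha : 0 ≤ a) (P : Fin q → Multiset ℝ)
    (hcard : ∀ t, Multiset.card (P t) = ℓ) (hsum : ∀ t, (P t).sum = ℓ * a)
    (htotal : ∑ t, P t = univ.val.map w) :
    topVector n q a ∈ sortedMeanVecSet n ℓ n ℓ (entryValue w) := by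
  choose W hW using fun t => Multiset.exists_fin_map_eq (hcard t)
  obtain ⟨φ, hφ⟩ : ∃ φ : Fin n ≃ Fin q × Fin ℓ, ∀ i, W (φ i).1 (φ i).2 = w i := by
    refine exists_equiv_comp_eq_of_map_univ_eq (g := fun tp : Fin q × Fin ℓ => W tp.1 tp.2) ?_
    rw [← htotal, val_map_eq_sum_singleton, Fintype.sum_prod_type]
    simp_rw [← val_map_eq_sum_singleton, hW]
  have hrow : ∀ t, ∑ p, w (φ.symm (t, p)) = ℓ * a := fun t => by
    simp_rw [← hφ, Equiv.apply_symm_apply]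
    rw [← hsum t, ← hW t, sum_eq_multiset_sum]
  refine ⟨topVector_monotone ha, gridAssign φ (reviewerGrid hn), validAssign_gridAssign _ _,
    Multiset.map_congr rfl fun j _ => ?_⟩
  obtain ⟨⟨t, s⟩, rfl⟩ := (reviewerGrid hn).surjective j
  rw [meanWeight_gridAssign, topVector_reviewerGrid]
  by_cases hs : s = 0
  · have hℓ : (ℓ : ℝ) ≠ 0 := Nat.cast_ne_zero.2 (NeZero.ne ℓ)
    subst hs
    simp only [if_true, entryValue_zero, hrow]
    field_simp
  · simp [if_neg hs, entryValue_of_ne_zero _ _ hs]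

end Reduction

/-- Crux of the NP-hardness theorem: in the setting where paper `i` has one entry of value
`w i ≥ 0` and `ℓ - 1` zero entries, the vector `v = (0, …, 0, a, …, a)` (with `n/ℓ` trailing
`a`'s, `a` the average of the `wᵢ`) lies in the convex hull of `Θ` if and only if the multiset
`{w₁, …, wₙ}` can be partitioned into `n/ℓ` sub-multisets each of cardinality `ℓ` and sum
`ℓ·a`. -/
theorem v_in_convexHull_iff_ell_partition
    (ℓ n : ℕ) (hℓ : 2 < ℓ) (hℓn : ℓ ≤ n) (hdvd : ℓ ∣ n)
    (w : Fin n → ℝ) (hw : ∀ i, 0 ≤ w i)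
    (a : ℝ) (ha : a = (1 / (n : ℝ)) * ∑ i, w i) :
    (fun i : Fin n => if (i : ℕ) < n - n / ℓ then (0 : ℝ) else a)
        ∈ convexHull ℝ
            (sortedMeanVecSet n ℓ n ℓ (fun e => if (e.2 : ℕ) = 0 then w e.1 else 0))
      ↔ ∃ P : Fin (n / ℓ) → Multiset ℝ,
          (∀ t, (P t).card = ℓ) ∧
          (∀ t, (P t).sum = (ℓ : ℝ) * a) ∧
          ∑ t : Fin (n / ℓ), P t = Multiset.map w (Finset.univ : Finset (Fin n)).val := by
  have : NeZero ℓ := ⟨by omega⟩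
  have hn : n / ℓ * ℓ = n := Nat.div_mul_cancel hdvd
  have hq : 0 < n / ℓ := Nat.div_pos hℓn (by omega)
  have hsum : ∑ i, w i = n * a := by
    have : (n : ℝ) ≠ 0 := Nat.cast_ne_zero.2 (by omega)
    rw [ha]
    field_simp
  change topVector n (n / ℓ) a ∈ convexHull ℝ (sortedMeanVecSet n ℓ n ℓ (entryValue w)) ↔ _
  constructor
  · exact fun h => exists_partition_of_topVector_mem hn hw
      (topVector_mem_of_mem_convexHull hn hq hw hsum h)
  · rintro ⟨P, hcard, hsumP, htotal⟩
    have ha0 : 0 ≤ a := ha ▸ mul_nonneg (by positivity) (sum_nonneg fun i _ => hw i)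
    exact subset_convexHull ℝ _ (topVector_mem_of_partition hn ha0 P hcard hsumP htotal)
end
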